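/- arXiv:2406.14431 — 4 statements merged into one kernel-verified Lean document; each statement's English description precedes it below -/
import Mathlib

section
/- With the family (f_t) of the preceding construction, for each fixed t₀ ∈ ℝ the coefficients (g_{t₀})_{m,n} = (f_{t₀})_{m,n}/(m + α n) vanish for all but at most one pair (m,n); in particular g_{t₀} is a smooth function on 𝕋² solving X g_{t₀} (up to the factor 2πi) with the given right-hand side. -/
open scoped Real

/-- A function `ℝ² → ℂ` is `ℤ²`-periodic, i.e. descends to the 2-torus `𝕋² = ℝ²/ℤ²`. -/
def IsPeriodic2 (f : ℝ × ℝ → ℂ) : Prop :=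
  ∀ (x y : ℝ) (k l : ℤ), f (x + (k : ℝ), y + (l : ℝ)) = f (x, y)

/-- The `(m,n)`-th Fourier coefficient of a (periodic) function on the 2-torus. -/
noncomputable def fourierCoef2 (f : ℝ × ℝ → ℂ) (m n : ℤ) : ℂ :=
  ∫ x in (0:ℝ)..1, ∫ y in (0:ℝ)..1,
    f (x, y) * Complex.exp (-(2 * (π : ℂ) * Complex.I) * ((m : ℂ) * (x : ℂ) + (n : ℂ) * (y : ℂ)))

lemma Eint (k : ℤ) : (∫ y in (0:ℝ)..1, Complex.exp (2 * π * Complex.I * k * y)) =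
    if k = 0 then 1 else 0 := by
  by_cases hk : k = 0
  · simp [hk]
  · have hc : 2 * (π:ℂ) * Complex.I * k ≠ 0 := by
      simp [Real.pi_ne_zero, Complex.I_ne_zero, hk]
    rw [if_neg hk, integral_exp_mul_complex hc]
    have h1 : Complex.exp (2 * π * Complex.I * k * 1) = 1 := by
      rw [mul_one]
      have := Complex.exp_int_mul_two_pi_mul_I k
      rw [← this]; ring_nf
    push_cast
    rw [h1, mul_zero, Complex.exp_zero, sub_self, zero_div]

lemma smooth_exp (aa : ℂ) (M N : ℤ) :
    ContDiff ℝ (⊤ : ℕ∞) (fun z : ℝ × ℝ => aa * Complex.exp (2 * π * Complex.I * ((M:ℂ) * z.1 + (N:ℂ) * z.2))) := by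
  have h1 : ContDiff ℝ (⊤ : ℕ∞) (fun z : ℝ × ℝ => ((z.1 : ℂ))) :=
    Complex.ofRealCLM.contDiff.comp contDiff_fst
  have h2 : ContDiff ℝ (⊤ : ℕ∞) (fun z : ℝ × ℝ => ((z.2 : ℂ))) :=
    Complex.ofRealCLM.contDiff.comp contDiff_snd
  have h : ContDiff ℝ (⊤ : ℕ∞) (fun z : ℝ × ℝ => 2 * (π:ℂ) * Complex.I * ((M:ℂ) * z.1 + (N:ℂ) * z.2)) :=
    contDiff_const.mul ((contDiff_const.mul h1).add (contDiff_const.mul h2))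
  exact contDiff_const.mul (Complex.contDiff_exp.comp h)

lemma periodic_exp (aa : ℂ) (M N : ℤ) :
    IsPeriodic2 (fun z : ℝ × ℝ => aa * Complex.exp (2 * π * Complex.I * ((M:ℂ) * z.1 + (N:ℂ) * z.2))) := by
  intro x y k l
  simp only
  congr 1
  rw [← mul_one (Complex.exp (2 * π * Complex.I * ((M:ℂ) * x + (N:ℂ) * y))),
    ← Complex.exp_int_mul_two_pi_mul_I (M * k + N * l), ← Complex.exp_add]
  congr 1; push_cast; ring

lemma fourierCoef2_exp (aa : ℂ) (M N m' n' : ℤ) :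
    fourierCoef2 (fun z : ℝ × ℝ => aa * Complex.exp (2 * π * Complex.I * ((M:ℂ) * z.1 + (N:ℂ) * z.2))) m' n'
      = if m' = M ∧ n' = N then aa else 0 := by
  unfold fourierCoef2
  have key : ∀ x y : ℝ,
      (aa * Complex.exp (2 * π * Complex.I * ((M:ℂ) * x + (N:ℂ) * y))) *
        Complex.exp (-(2 * (π:ℂ) * Complex.I) * ((m':ℂ) * x + (n':ℂ) * y))
      = aa * (Complex.exp (2 * π * Complex.I * ((M - m' : ℤ):ℂ) * x) *
          Complex.exp (2 * π * Complex.I * ((N - n' : ℤ):ℂ) * y)) := by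
    intro x y
    rw [mul_assoc, ← Complex.exp_add, ← Complex.exp_add]
    congr 1; push_cast; ring
  simp_rw [key]
  simp_rw [intervalIntegral.integral_const_mul, Eint (N - n'), intervalIntegral.integral_mul_const, Eint (M - m')]
  by_cases h1 : m' = M <;> by_cases h2 : n' = N
  · subst h1; subst h2; simp
  · subst h1; simp [h2, sub_eq_zero, Ne.symm h2]
  · subst h2; simp [h1, sub_eq_zero, Ne.symm h1]
  · simp [h1, h2, sub_ne_zero.mpr (Ne.symm h1)]

/-- With the family `(f_t)` of the preceding construction (the supports of the bump factors
being pairwise disjoint), for each fixed `t₀` the coefficients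
`(g_{t₀})_{m,n} = (f_{t₀})_{m,n}/(m + α n)` vanish for all but at most one pair `(m,n)`;
in particular they are the Fourier coefficients of a smooth function `g_{t₀}` on `𝕋²`. -/
theorem pointwise_solution_of_family
    (α : ℝ) (hα : Liouville α) (m n : ℕ → ℤ)
    (hinj : Function.Injective fun p => (m p, n p))
    (hn : ∀ p : ℕ, 1 ≤ p → (p : ℤ) ≤ n p)
    (happrox : ∀ p : ℕ, 1 ≤ p →
      |(m p : ℝ) + α * (n p : ℝ)| ≤ 1 / (|(m p : ℝ)| + |(n p : ℝ)|) ^ p)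
    (ρ : ℝ → ℝ) (hρ : ContDiff ℝ (⊤ : ℕ∞) ρ)
    (hρsupp : ∀ x : ℝ, x ∉ Set.Icc (-1 : ℝ) 1 → ρ x = 0) (hρ0 : ρ 0 = 1)
    (c : ℝ → ℤ × ℤ → ℝ)
    (hc1 : ∀ (t : ℝ) (p : ℕ), 1 ≤ p → c t (m p, n p) =
      ((m p : ℝ) + α * (n p : ℝ)) * (|(m p : ℝ)| + |(n p : ℝ)|) *
        ρ ((p * (p + 1) : ℝ) * (t - 1 / (p : ℝ))))
    (hc2 : ∀ (t : ℝ) (q : ℤ × ℤ), (∀ p : ℕ, 1 ≤ p → q ≠ (m p, n p)) → c t q = 0)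
    (hdisj : ∀ p q : ℕ, 1 ≤ p → 1 ≤ q → p ≠ q → ∀ t : ℝ,
      ρ ((p * (p + 1) : ℝ) * (t - 1 / (p : ℝ))) = 0 ∨
      ρ ((q * (q + 1) : ℝ) * (t - 1 / (q : ℝ))) = 0) :
    ∀ t₀ : ℝ,
      Set.Subsingleton { q : ℤ × ℤ | c t₀ q ≠ 0 } ∧
      ∃ g : ℝ × ℝ → ℂ, ContDiff ℝ (⊤ : ℕ∞) g ∧ IsPeriodic2 g ∧
        ∀ q : ℤ × ℤ, fourierCoef2 g q.1 q.2 =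
          (c t₀ q : ℂ) / ((q.1 : ℂ) + (α : ℂ) * (q.2 : ℂ)) := by
  intro t₀
  -- every nonzero coefficient comes from some p with nonvanishing bump
  have hrep : ∀ q : ℤ × ℤ, c t₀ q ≠ 0 → ∃ p : ℕ, 1 ≤ p ∧ q = (m p, n p) ∧
      ρ ((p * (p + 1) : ℝ) * (t₀ - 1 / (p : ℝ))) ≠ 0 := by
    intro q hq
    by_contra hcon
    push_neg at hcon
    by_cases hex : ∃ p : ℕ, 1 ≤ p ∧ q = (m p, n p)
    · obtain ⟨p, hp1, hpq⟩ := hex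
      have hρne := hcon p hp1 hpq
      rw [hpq, hc1 t₀ p hp1, hρne, mul_zero] at hq
      exact hq rfl
    · push_neg at hex
      exact hq (hc2 t₀ q fun p hp => hex p hp)
  have hsub : Set.Subsingleton { q : ℤ × ℤ | c t₀ q ≠ 0 } := by
    intro q hq q' hq'
    obtain ⟨p, hp1, hpq, hpρ⟩ := hrep q hq
    obtain ⟨p', hp1', hpq', hpρ'⟩ := hrep q' hq'
    have hpp : p = p' := by
      by_contra hne
      rcases hdisj p p' hp1 hp1' hne t₀ with h | h
      · exact hpρ h
      · exact hpρ' h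
    rw [hpq, hpq', hpp]
  refine ⟨hsub, ?_⟩
  by_cases hE : ∃ q₀ : ℤ × ℤ, c t₀ q₀ ≠ 0
  · obtain ⟨q₀, hq₀⟩ := hE
    obtain ⟨p, hp1, hpq, hpρ⟩ := hrep q₀ hq₀
    set M := m p with hM
    set N := n p with hN
    have hden : (m p : ℝ) + α * (n p : ℝ) ≠ 0 := by
      intro h
      rw [hpq, hc1 t₀ p hp1, h, zero_mul, zero_mul] at hq₀
      exact hq₀ rfl
    set aa : ℂ := (c t₀ q₀ : ℂ) / ((M : ℂ) + (α : ℂ) * (N : ℂ)) with haa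
    refine ⟨fun z : ℝ × ℝ => aa * Complex.exp (2 * π * Complex.I * ((M:ℂ) * z.1 + (N:ℂ) * z.2)),
      smooth_exp aa M N, periodic_exp aa M N, ?_⟩
    intro q
    rw [fourierCoef2_exp]
    by_cases hq : q = q₀
    · subst hq
      rw [hpq]
      simp [haa, hpq]
    · have hcq : c t₀ q = 0 := by
        by_contra hne
        exact hq (hsub hne hq₀)
      rw [hcq]
      rw [if_neg, Complex.ofReal_zero, zero_div]
      rintro ⟨h1, h2⟩
      exact hq (by rw [hpq, ← h1, ← h2])
  · push_neg at hE
    refine ⟨fun _ => 0, contDiff_const, fun _ _ _ _ => rfl, ?_⟩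
    intro q
    rw [hE q, Complex.ofReal_zero, zero_div]
    unfold fourierCoef2
    simp
end

section
/- With the same family (f_t), any family (g_t) of smooth functions with Xg_t = f_t fails to be continuous in t at t = 0: for every interval I around 0, sup_{t ∈ I} |(g_t)_{m_p,n_p}| = |m_p| + |n_p| for all sufficiently large p, so the coefficients are not uniformly bounded on I. Hence there is no continuous family of smooth solutions. -/
open scoped Real

/-- With the same family `(f_t)`, the coefficients `(g_t)_{m,n} = (f_t)_{m,n}/(m + αn)` of any
family of solutions of `Xg_t = f_t` fail to be uniformly bounded on any interval around
`t = 0`: for every interval `(-ε, ε)` and all sufficiently large `p`,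
`sup_{|t|<ε} |(g_t)_{m_p,n_p}| = |m_p| + |n_p|`; hence there is no continuous family of
smooth solutions. -/
theorem no_continuous_family_of_solutions
    (α : ℝ) (hα : Liouville α) (m n : ℕ → ℤ)
    (hinj : Function.Injective fun p => (m p, n p))
    (hn : ∀ p : ℕ, 1 ≤ p → (p : ℤ) ≤ n p)
    (happrox : ∀ p : ℕ, 1 ≤ p →
      |(m p : ℝ) + α * (n p : ℝ)| ≤ 1 / (|(m p : ℝ)| + |(n p : ℝ)|) ^ p)
    (ρ : ℝ → ℝ) (hρ : ContDiff ℝ (⊤ : ℕ∞) ρ)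
    (hρsupp : ∀ x : ℝ, x ∉ Set.Icc (-1 : ℝ) 1 → ρ x = 0) (hρ0 : ρ 0 = 1)
    (c : ℝ → ℤ × ℤ → ℝ)
    (hc1 : ∀ (t : ℝ) (p : ℕ), 1 ≤ p → c t (m p, n p) =
      ((m p : ℝ) + α * (n p : ℝ)) * (|(m p : ℝ)| + |(n p : ℝ)|) *
        ρ ((p * (p + 1) : ℝ) * (t - 1 / (p : ℝ))))
    (hc2 : ∀ (t : ℝ) (q : ℤ × ℤ), (∀ p : ℕ, 1 ≤ p → q ≠ (m p, n p)) → c t q = 0)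
    (hρbd : ∀ x : ℝ, |ρ x| ≤ 1)
    (hdisj : ∀ p q : ℕ, 1 ≤ p → 1 ≤ q → p ≠ q → ∀ t : ℝ,
      ρ ((p * (p + 1) : ℝ) * (t - 1 / (p : ℝ))) = 0 ∨
      ρ ((q * (q + 1) : ℝ) * (t - 1 / (q : ℝ))) = 0) :
    (∀ ε : ℝ, 0 < ε → ∃ P : ℕ, ∀ p : ℕ, P ≤ p →
      (∀ t : ℝ, |t| < ε →
        |c t (m p, n p) / ((m p : ℝ) + α * (n p : ℝ))| ≤ |(m p : ℝ)| + |(n p : ℝ)|) ∧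
      ∃ t : ℝ, |t| < ε ∧
        |c t (m p, n p) / ((m p : ℝ) + α * (n p : ℝ))| = |(m p : ℝ)| + |(n p : ℝ)|) ∧
    ∀ ε : ℝ, 0 < ε → ¬ ∃ C : ℝ, ∀ t : ℝ, |t| < ε → ∀ q : ℤ × ℤ,
      |c t q / ((q.1 : ℝ) + α * (q.2 : ℝ))| ≤ C := by
  have hirr := hα.irrational
  rw [irrational_iff_ne_rational] at hirr
  have hne : ∀ p : ℕ, 1 ≤ p → ((m p : ℝ) + α * (n p : ℝ)) ≠ 0 := by
    intro p hp h
    have hn1 : (1 : ℤ) ≤ n p := le_trans (by exact_mod_cast hp) (hn p hp)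
    have hnp : (0 : ℤ) < n p := hn1
    have hnr : (0 : ℝ) < (n p : ℝ) := by exact_mod_cast hnp
    apply hirr (-(m p)) (n p) hnp.ne'
    push_cast
    rw [eq_div_iff hnr.ne']
    linarith
  have key : ∀ p : ℕ, 1 ≤ p → ∀ t : ℝ,
      c t (m p, n p) / ((m p : ℝ) + α * (n p : ℝ)) =
      (|(m p : ℝ)| + |(n p : ℝ)|) * ρ ((p * (p + 1) : ℝ) * (t - 1 / (p : ℝ))) := by
    intro p hp t
    rw [hc1 t p hp]
    rw [mul_assoc, mul_comm, mul_div_assoc, div_self (hne p hp), mul_one]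
  have main : ∀ ε : ℝ, 0 < ε → ∃ P : ℕ, ∀ p : ℕ, P ≤ p →
      (∀ t : ℝ, |t| < ε →
        |c t (m p, n p) / ((m p : ℝ) + α * (n p : ℝ))| ≤ |(m p : ℝ)| + |(n p : ℝ)|) ∧
      ∃ t : ℝ, |t| < ε ∧
        |c t (m p, n p) / ((m p : ℝ) + α * (n p : ℝ))| = |(m p : ℝ)| + |(n p : ℝ)| := by
    intro ε hε
    obtain ⟨N, hN⟩ := exists_nat_gt (1 / ε)
    refine ⟨max N 1, fun p hp => ?_⟩
    have hp1 : 1 ≤ p := le_trans (le_max_right N 1) hp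
    have hpN : N ≤ p := le_trans (le_max_left N 1) hp
    have hppos : (0 : ℝ) < (p : ℝ) := by exact_mod_cast hp1
    have hpe : (1 : ℝ) / (p : ℝ) < ε := by
      rw [div_lt_iff₀ hppos]
      have : (1 : ℝ) / ε < (p : ℝ) := lt_of_lt_of_le hN (by exact_mod_cast hpN)
      rw [div_lt_iff₀ hε] at this
      linarith
    have habs : (0 : ℝ) ≤ |(m p : ℝ)| + |(n p : ℝ)| := by positivity
    constructor
    · intro t ht
      rw [key p hp1 t, abs_mul, abs_of_nonneg habs]
      calc (|(m p : ℝ)| + |(n p : ℝ)|) * |ρ ((p * (p + 1) : ℝ) * (t - 1 / (p : ℝ)))|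
          ≤ (|(m p : ℝ)| + |(n p : ℝ)|) * 1 := by
            exact mul_le_mul_of_nonneg_left (hρbd _) habs
        _ = |(m p : ℝ)| + |(n p : ℝ)| := mul_one _
    · refine ⟨1 / (p : ℝ), ?_, ?_⟩
      · rw [abs_of_pos (by positivity)]; exact hpe
      · rw [key p hp1]
        have : ((p : ℝ) * (p + 1)) * (1 / (p : ℝ) - 1 / (p : ℝ)) = 0 := by ring
        rw [this, hρ0, mul_one, abs_of_nonneg habs]
  refine ⟨main, ?_⟩
  intro ε hε ⟨C, hC⟩
  obtain ⟨P, hP⟩ := main ε hε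
  set p := max P (max 1 (⌈C⌉₊ + 1)) with hpdef
  have hp1 : 1 ≤ p := le_trans (le_max_left 1 _) (le_max_right P _)
  have hpC : ⌈C⌉₊ + 1 ≤ p := le_trans (le_max_right 1 _) (le_max_right P _)
  obtain ⟨t, ht, heq⟩ := (hP p (le_max_left _ _)).2
  have hb := hC t ht (m p, n p)
  rw [heq] at hb
  have hn1 : (p : ℤ) ≤ n p := hn p hp1
  have hnr : (p : ℝ) ≤ |(n p : ℝ)| := by
    refine le_trans ?_ (le_abs_self _)
    exact_mod_cast hn1
  have hCle : C ≤ (⌈C⌉₊ : ℝ) := Nat.le_ceil C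
  have hpr : ((⌈C⌉₊ : ℝ) + 1) ≤ (p : ℝ) := by exact_mod_cast hpC
  have hm : (0 : ℝ) ≤ |(m p : ℝ)| := abs_nonneg _
  linarith
end

section
/- Let E be a metrizable topological vector space and N ⊆ E a closed subspace. Then the completion of the quotient E/N is isomorphic (as a topological vector space) to Ê/N̄, where Ê is the completion of E and N̄ is the closure of N in Ê. -/
/-!
If `ι x ≡ v` modulo `N̄ = closure (ι N)` with `v` small, then `ι x - v` is approximated by some
`ι n` with `n ∈ N`, so `ι (x - n)` is small and hence `x` is small in `E/N`: this makes
`E/N → Ê/N̄` inducing. Its range is dense because that of `ι` is, and `Ê/N̄` is complete as a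
quotient of a complete first-countable group.
-/
open Topology Filter

theorem exists_sub_mem_of_sub_mem_closure {H : Type*} [AddCommGroup H] [TopologicalSpace H]
    [IsTopologicalAddGroup H] {S V W : Set H} (hV : V ∈ 𝓝 0)
    (hVW : ∀ v ∈ V, ∀ w ∈ V, v - w ∈ W) {x v : H} (hv : v ∈ V) (hx : x - v ∈ closure S) :
    ∃ s ∈ S, x - s ∈ W := by
  obtain ⟨s, hs, hsV⟩ := mem_closure_iff_nhds_zero.mp hx V hV
  refine ⟨s, hs, ?_⟩
  convert hVW v hv _ hsV using 1
  abel

namespace QuotientAddGroup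

variable {G H : Type*} [AddCommGroup G] [AddCommGroup H] [TopologicalSpace H]
  {f : G →+ H} {N : AddSubgroup G} {M : AddSubgroup H}

theorem denseRange_map (hf : DenseRange f) (hNM : N ≤ M.comap f) :
    DenseRange (map N M f hNM) :=
  DenseRange.of_comp (g := ((↑) : G → G ⧸ N))
    ((mk_surjective (s := M)).denseRange.comp hf continuous_quot_mk)

variable [TopologicalSpace G]

theorem continuous_map (hf : Continuous f) (hNM : N ≤ M.comap f) :
    Continuous (map N M f hNM) :=
  continuous_quot_lift _ (continuous_quot_mk.comp hf)

variable [IsTopologicalAddGroup G] [IsTopologicalAddGroup H]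

theorem isInducing_map (hf : IsInducing f) (hNM : N ≤ M.comap f)
    (hM : (M : Set H) ⊆ closure (f '' N)) : IsInducing (map N M f hNM) := by
  refine IsTopologicalAddGroup.isInducing_iff_nhds_zero.mpr <| le_antisymm
    (by simpa using ((continuous_map hf.continuous hNM).tendsto 0).le_comap) ?_
  intro U hU
  rw [← mk_zero, nhds_eq, mem_map, hf.nhds_eq_comap, map_zero] at hU
  obtain ⟨W, hW, hWU⟩ := hU
  obtain ⟨V, hV, hVW⟩ := exists_nhds_half_neg hW
  refine ⟨(↑) '' V, by rw [← mk_zero M]; exact isOpenMap_coe.image_mem_nhds hV, ?_⟩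
  rintro y ⟨v, hv, hvy⟩
  induction y using induction_on with | H x => ?_
  rw [map_mk, QuotientAddGroup.eq] at hvy
  obtain ⟨_, ⟨n, hn, rfl⟩, hxn⟩ :=
    exists_sub_mem_of_sub_mem_closure hV hVW hv (hM (by simpa [sub_eq_neg_add] using hvy))
  have hmk : ((x - n : G) : G ⧸ N) = x := QuotientAddGroup.eq.mpr (by simpa using hn)
  rw [← hmk]
  exact hWU (by simpa using hxn)

end QuotientAddGroup

theorem completion_of_quotient_general (E : Type*) [AddCommGroup E] [Module ℝ E] [TopologicalSpace E]
    [IsTopologicalAddGroup E]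
    (Ehat : Type*) [AddCommGroup Ehat] [Module ℝ Ehat] [UniformSpace Ehat]
    [IsUniformAddGroup Ehat] [ContinuousSMul ℝ Ehat] [CompleteSpace Ehat]
    [TopologicalSpace.MetrizableSpace Ehat]
    (ι : E →L[ℝ] Ehat) (hι : Topology.IsInducing ι) (hdense : DenseRange ι)
    (N : Submodule ℝ E) :
    let Nbar : Submodule ℝ Ehat := (N.map (ι : E →ₗ[ℝ] Ehat)).topologicalClosure
    let q : (E ⧸ N) →ₗ[ℝ] (Ehat ⧸ Nbar) :=
      N.mapQ Nbar (ι : E →ₗ[ℝ] Ehat)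
        (fun x hx => Submodule.le_topologicalClosure _ (Submodule.mem_map_of_mem hx))
    Topology.IsInducing ⇑q ∧ DenseRange ⇑q ∧
      @CompleteSpace (Ehat ⧸ Nbar) (IsTopologicalAddGroup.rightUniformSpace _) := by
  intro Nbar q
  have hNM : N.toAddSubgroup ≤ Nbar.toAddSubgroup.comap ι.toAddMonoidHom :=
    fun _ hx => Submodule.le_topologicalClosure _ (Submodule.mem_map_of_mem hx)
  have hq : ⇑q = QuotientAddGroup.map _ _ ι.toAddMonoidHom hNM := rfl
  rw [hq]
  exact ⟨QuotientAddGroup.isInducing_map hι hNM subset_rfl,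
    QuotientAddGroup.denseRange_map hdense hNM,
    QuotientAddGroup.completeSpace_right Ehat Nbar.toAddSubgroup⟩

/-- For a metrizable topological vector space `E` with completion `Ê` and a closed subspace
`N ⊆ E`, the quotient `Ê/N̄` (where `N̄` is the closure of `N` in `Ê`) is a completion of
`E/N`: the natural map `E/N → Ê/N̄` is inducing with dense range and `Ê/N̄` is complete.
In other words, the completion of `E/N` is isomorphic as a TVS to `Ê/N̄`. -/
theorem completion_of_quotient (E : Type*) [AddCommGroup E] [Module ℝ E] [TopologicalSpace E]
    [IsTopologicalAddGroup E] [ContinuousSMul ℝ E] [TopologicalSpace.MetrizableSpace E]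
    (Ehat : Type*) [AddCommGroup Ehat] [Module ℝ Ehat] [UniformSpace Ehat]
    [IsUniformAddGroup Ehat] [ContinuousSMul ℝ Ehat] [CompleteSpace Ehat]
    [TopologicalSpace.MetrizableSpace Ehat]
    (ι : E →L[ℝ] Ehat) (hι : Topology.IsInducing ι) (hdense : DenseRange ι)
    (N : Submodule ℝ E) (hN : IsClosed (N : Set E)) :
    let Nbar : Submodule ℝ Ehat := (N.map (ι : E →ₗ[ℝ] Ehat)).topologicalClosure
    let q : (E ⧸ N) →ₗ[ℝ] (Ehat ⧸ Nbar) :=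
      N.mapQ Nbar (ι : E →ₗ[ℝ] Ehat)
        (fun x hx => Submodule.le_topologicalClosure _ (Submodule.mem_map_of_mem hx))
    Topology.IsInducing ⇑q ∧ DenseRange ⇑q ∧
      @CompleteSpace (Ehat ⧸ Nbar) (IsTopologicalAddGroup.rightUniformSpace _) :=
  completion_of_quotient_general E Ehat ι hι hdense N
end

section
/- Let E, F be locally convex topological vector spaces, T : E → F a continuous linear SK-homomorphism, and V a finite-dimensional normed space. Then T ⊕ id : E ⊕ V → F ⊕ V is an SK-homomorphism: for every continuous seminorm p on E ⊕ V there is a continuous seminorm q̄ on F ⊕ V with (T ⊕ id)(ker p) ⊇ ker q̄ ∩ im(T ⊕ id). -/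
/-!
The identity of any space is an SK-homomorphism (take `q = p`), and SK-homomorphisms are stable
under products: restrict a seminorm `p` on `E × G` to the two factors, take seminorms `q₁`, `q₂`
for the restrictions, and use `q₁ ∘ fst + q₂ ∘ snd`. A vector killed by this sum is killed by both
summands, so each coordinate has a preimage killed by the corresponding restriction of `p`, and by
the triangle inequality `p` kills the pair of preimages.
-/

namespace LinearMap

variable {𝕜 E F G H : Type*} [SeminormedRing 𝕜]
  [AddCommGroup E] [Module 𝕜 E] [TopologicalSpace E]
  [AddCommGroup F] [Module 𝕜 F] [TopologicalSpace F]
  [AddCommGroup G] [Module 𝕜 G] [TopologicalSpace G]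
  [AddCommGroup H] [Module 𝕜 H] [TopologicalSpace H]

def IsSKHomomorphism (T : E →ₗ[𝕜] F) : Prop :=
  ∀ p : Seminorm 𝕜 E, Continuous p → ∃ q : Seminorm 𝕜 F, Continuous q ∧
    ∀ y ∈ range T, q y = 0 → ∃ x, p x = 0 ∧ T x = y

theorem isSKHomomorphism_id : (id : E →ₗ[𝕜] E).IsSKHomomorphism :=
  fun p hp => ⟨p, hp, fun y _ hy => ⟨y, hy, rfl⟩⟩

theorem IsSKHomomorphism.prodMap {T : E →ₗ[𝕜] F} {S : G →ₗ[𝕜] H}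
    (hT : T.IsSKHomomorphism) (hS : S.IsSKHomomorphism) : (T.prodMap S).IsSKHomomorphism := by
  intro p hp
  obtain ⟨q₁, hq₁, hTq₁⟩ := hT (p.comp (inl 𝕜 E G)) (hp.comp (.prodMk_left 0))
  obtain ⟨q₂, hq₂, hSq₂⟩ := hS (p.comp (inr 𝕜 E G)) (hp.comp (.prodMk_right 0))
  refine ⟨q₁.comp (fst 𝕜 F H) + q₂.comp (snd 𝕜 F H),
    (hq₁.comp continuous_fst).add (hq₂.comp continuous_snd), ?_⟩
  rintro ⟨y, v⟩ ⟨⟨x, u⟩, hxu⟩ hyv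
  simp only [prodMap_apply, Prod.mk.injEq] at hxu
  have hq : q₁ y = 0 ∧ q₂ v = 0 :=
    (add_eq_zero_iff_of_nonneg (apply_nonneg _ _) (apply_nonneg _ _)).mp hyv
  obtain ⟨x₀, hx₀, rfl⟩ := hTq₁ y ⟨x, hxu.1⟩ hq.1
  obtain ⟨u₀, hu₀, rfl⟩ := hSq₂ v ⟨u, hxu.2⟩ hq.2
  refine ⟨(x₀, u₀), le_antisymm ?_ (apply_nonneg _ _), rfl⟩
  calc p (x₀, u₀) = p ((x₀, 0) + (0, u₀)) := by simp
    _ ≤ p (x₀, 0) + p (0, u₀) := map_add_le_add p _ _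
    _ = 0 + 0 := congrArg₂ (· + ·) hx₀ hu₀
    _ = 0 := add_zero 0

end LinearMap

theorem sk_prod_id_general
    (E : Type*) [AddCommGroup E] [Module ℝ E] [TopologicalSpace E]
    (F : Type*) [AddCommGroup F] [Module ℝ F] [TopologicalSpace F]
    (V : Type*) [NormedAddCommGroup V] [NormedSpace ℝ V]
    (T : E →L[ℝ] F)
    (hT : ∀ p : Seminorm ℝ E, Continuous ⇑p → ∃ q : Seminorm ℝ F, Continuous ⇑q ∧
      ∀ y : F, y ∈ LinearMap.range (T : E →ₗ[ℝ] F) → q y = 0 → ∃ x : E, p x = 0 ∧ T x = y) :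
    ∀ p : Seminorm ℝ (E × V), Continuous ⇑p →
      ∃ q : Seminorm ℝ (F × V), Continuous ⇑q ∧
        ∀ z : F × V, z ∈ LinearMap.range (T.prodMap (ContinuousLinearMap.id ℝ V) : E × V →ₗ[ℝ] F × V) →
          q z = 0 → ∃ w : E × V, p w = 0 ∧ T.prodMap (ContinuousLinearMap.id ℝ V) w = z :=
  LinearMap.IsSKHomomorphism.prodMap (S := LinearMap.id) hT LinearMap.isSKHomomorphism_id

/-- If `T : E → F` is an SK-homomorphism and `V` is a finite-dimensional normed space, then
`T ⊕ id : E ⊕ V → F ⊕ V` is an SK-homomorphism. -/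
theorem sk_prod_id
    (E : Type*) [AddCommGroup E] [Module ℝ E] [TopologicalSpace E] [IsTopologicalAddGroup E]
    [ContinuousSMul ℝ E]
    (F : Type*) [AddCommGroup F] [Module ℝ F] [TopologicalSpace F] [IsTopologicalAddGroup F]
    [ContinuousSMul ℝ F]
    (V : Type*) [NormedAddCommGroup V] [NormedSpace ℝ V] [FiniteDimensional ℝ V]
    (T : E →L[ℝ] F)
    (hT : ∀ p : Seminorm ℝ E, Continuous ⇑p → ∃ q : Seminorm ℝ F, Continuous ⇑q ∧
      ∀ y : F, y ∈ LinearMap.range (T : E →ₗ[ℝ] F) → q y = 0 → ∃ x : E, p x = 0 ∧ T x = y) :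
    ∀ p : Seminorm ℝ (E × V), Continuous ⇑p →
      ∃ q : Seminorm ℝ (F × V), Continuous ⇑q ∧
        ∀ z : F × V, z ∈ LinearMap.range (T.prodMap (ContinuousLinearMap.id ℝ V) : E × V →ₗ[ℝ] F × V) →
          q z = 0 → ∃ w : E × V, p w = 0 ∧ T.prodMap (ContinuousLinearMap.id ℝ V) w = z :=
  sk_prod_id_general E F V T hT
end
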